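/- arXiv:1111.2938 — 4 statements merged into one kernel-verified Lean document; each statement's English description precedes it below -/
import Mathlib

section
/- Let V be a finite-dimensional real inner product space and let H : V → V be a self-adjoint positive semidefinite linear operator all of whose eigenvalues are at most 3 (equivalently, 0 ≤ ⟨x, Hx⟩ ≤ 3‖x‖² for all x ∈ V). Let g ∈ V, let h : ℕ → V, and let u : ℕ → V satisfy the inhomogeneous discrete wave equation u(t+1) − 2u(t) + u(t−1) = −H u(t) + h(t) for all t ≥ 1, with u(0) = 0 and u(1) = g. Then for every t ∈ ℕ, the energy E_H(u(t)) := ⟨u(t), H u(t)⟩ satisfies E_H(u(t))^{1/2} ≤ 2(‖g‖ + Σ_{k=1}^{t} ‖h(k)‖). -/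
open scoped RealInnerProductSpace

/-!
Write the scheme as `u (n + 2) = 2 u (n + 1) - u n - H u (n + 1) + h (n + 1)` and give the pair
`(x, y) = (u (n + 1), u n)` the energy `E (x, y) = ‖x - y‖² + ⟪x, H y⟫`. Without forcing this step
conserves `E` exactly. Since `4 E (x, y) = 4 ‖x - y‖² - ⟪x - y, H (x - y)⟫ + ⟪x + y, H (x + y)⟫`,
`E` is a positive semidefinite quadratic form on `V × V` as soon as `H ≤ 4`, so `√E` is a seminorm.
The forcing adds `(h (n + 1), 0)`, whose energy is `‖h (n + 1)‖²`, and the triangle inequality gives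
`√E (n + 1) ≤ √E n + ‖h (n + 1)‖`, starting from `√E 0 = ‖g‖`. Finally `H ≤ 3` yields
`⟪y, H y⟫ ≤ 4 E (x, y)`.
-/

namespace LinearMap.BilinForm

section

variable {R M : Type*} [Field R] [LinearOrder R] [IsStrictOrderedRing R]
  [AddCommGroup M] [Module R M] {B : LinearMap.BilinForm R M}

theorem IsPosSemidef.apply_sq_le (hB : B.IsPosSemidef) (x y : M) :
    B x y ^ 2 ≤ B x x * B y y := by
  have hquad : ∀ r : R, 0 ≤ B y y * (r * r) + 2 * B x y * r + B x x := fun r => by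
    have := hB.nonneg (x + r • y)
    simp only [map_add, map_smul, LinearMap.add_apply, LinearMap.smul_apply, smul_eq_mul,
      hB.isSymm.eq y x] at this
    linear_combination this
  have := discrim_le_zero hquad
  rw [discrim] at this
  nlinarith

end

section Real

variable {M : Type*} [AddCommGroup M] [Module ℝ M] {B : LinearMap.BilinForm ℝ M}

theorem IsPosSemidef.sqrt_apply_add_self_le (hB : B.IsPosSemidef) (x y : M) :
    √(B (x + y) (x + y)) ≤ √(B x x) + √(B y y) := by
  have hcs : B x y ≤ √(B x x) * √(B y y) := by
    rw [← Real.sqrt_mul (hB.nonneg x)]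
    exact Real.le_sqrt_of_sq_le (hB.apply_sq_le x y)
  rw [Real.sqrt_le_left (by positivity)]
  simp only [map_add, LinearMap.add_apply, hB.isSymm.eq y x]
  rw [add_sq, Real.sq_sqrt (hB.nonneg x), Real.sq_sqrt (hB.nonneg y)]
  linarith

end Real

end LinearMap.BilinForm

section DiscreteWave

variable {V : Type*} [NormedAddCommGroup V] [InnerProductSpace ℝ V]

noncomputable def discreteWaveEnergyForm (H : V →ₗ[ℝ] V) : LinearMap.BilinForm ℝ (V × V) :=
  LinearMap.mk₂ ℝ (fun p q => ⟪p.1 - p.2, q.1 - q.2⟫ + (⟪p.1, H q.2⟫ + ⟪q.1, H p.2⟫) / 2)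
    (fun p p' q => by
      simp only [Prod.fst_add, Prod.snd_add, add_sub_add_comm, map_add, inner_add_left,
        inner_add_right]; ring)
    (fun c p q => by
      simp only [Prod.smul_fst, Prod.smul_snd, ← smul_sub, map_smul, real_inner_smul_left,
        real_inner_smul_right, smul_eq_mul]; ring)
    (fun p q q' => by
      simp only [Prod.fst_add, Prod.snd_add, add_sub_add_comm, map_add, inner_add_left,
        inner_add_right]; ring)
    (fun c p q => by
      simp only [Prod.smul_fst, Prod.smul_snd, ← smul_sub, map_smul, real_inner_smul_left,
        real_inner_smul_right, smul_eq_mul]; ring)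

variable {H : V →ₗ[ℝ] V}

theorem discreteWaveEnergyForm_apply_self (x y : V) :
    discreteWaveEnergyForm H (x, y) (x, y) = ‖x - y‖ ^ 2 + ⟪x, H y⟫ := by
  rw [discreteWaveEnergyForm, LinearMap.mk₂_apply, real_inner_self_eq_norm_sq]
  ring

theorem four_mul_discreteWaveEnergyForm_apply_self (hH : H.IsSymmetric) (x y : V) :
    4 * discreteWaveEnergyForm H (x, y) (x, y) =
      4 * ‖x - y‖ ^ 2 - ⟪x - y, H (x - y)⟫ + ⟪x + y, H (x + y)⟫ := by
  rw [discreteWaveEnergyForm_apply_self]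
  simp only [map_add, map_sub, inner_add_left, inner_add_right, inner_sub_left, inner_sub_right]
  rw [← hH y x, real_inner_comm]
  ring

theorem isPosSemidef_discreteWaveEnergyForm (hH : H.IsSymmetric) (hpos : ∀ x, 0 ≤ ⟪x, H x⟫)
    (hle : ∀ x, ⟪x, H x⟫ ≤ 4 * ‖x‖ ^ 2) : (discreteWaveEnergyForm H).IsPosSemidef where
  eq p q := by
    simp only [discreteWaveEnergyForm, LinearMap.mk₂_apply, real_inner_comm (p.1 - p.2)]
    ring
  nonneg := fun (x, y) => by
    have := four_mul_discreteWaveEnergyForm_apply_self hH x y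
    linarith [hle (x - y), hpos (x + y)]

theorem discreteWaveEnergyForm_step (hH : H.IsSymmetric) (x y : V) :
    discreteWaveEnergyForm H ((2 : ℝ) • x - y - H x, x) ((2 : ℝ) • x - y - H x, x) =
      discreteWaveEnergyForm H (x, y) (x, y) := by
  simp only [discreteWaveEnergyForm_apply_self, ← real_inner_self_eq_norm_sq, inner_sub_left,
    inner_sub_right, real_inner_smul_left, real_inner_smul_right]
  rw [← hH x y, real_inner_comm (H x) y, real_inner_comm (H x) x, real_inner_comm x y]
  ring

theorem sqrt_discreteWaveEnergyForm_forced_step_le (hB : (discreteWaveEnergyForm H).IsPosSemidef)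
    (hH : H.IsSymmetric) (x y c : V) :
    √(discreteWaveEnergyForm H ((2 : ℝ) • x - y - H x + c, x) ((2 : ℝ) • x - y - H x + c, x)) ≤
      √(discreteWaveEnergyForm H (x, y) (x, y)) + ‖c‖ := by
  have htri := hB.sqrt_apply_add_self_le ((2 : ℝ) • x - y - H x, x) (c, 0)
  rwa [Prod.mk_add_mk, add_zero, discreteWaveEnergyForm_step hH,
    discreteWaveEnergyForm_apply_self c, sub_zero, map_zero, inner_zero_right, add_zero,
    Real.sqrt_sq (norm_nonneg c)] at htri

theorem inner_map_self_le_four_mul_discreteWaveEnergyForm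
    (hB : (discreteWaveEnergyForm H).IsPosSemidef) (hH : H.IsSymmetric)
    (hle : ∀ x, ⟪x, H x⟫ ≤ 3 * ‖x‖ ^ 2) (x y : V) :
    ⟪y, H y⟫ ≤ 4 * discreteWaveEnergyForm H (x, y) (x, y) := by
  have hdiag : ∀ z, discreteWaveEnergyForm H (z, z) (z, z) = ⟪z, H z⟫ := fun z => by
    rw [discreteWaveEnergyForm_apply_self, sub_self, norm_zero]; ring
  -- On the diagonal the energy is the `H`-energy, so its triangle inequality applies to
  -- `2 y = (x + y) - (x - y)`.
  have htri := hB.sqrt_apply_add_self_le (x + y, x + y) (-(x - y), -(x - y))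
  rw [Prod.mk_add_mk, hdiag, hdiag, hdiag, map_neg, inner_neg_neg,
    show x + y + -(x - y) = (2 : ℝ) • y by module, map_smul, real_inner_smul_left,
    real_inner_smul_right] at htri
  have henergy := four_mul_discreteWaveEnergyForm_apply_self hH x y
  set α := √⟪x + y, H (x + y)⟫
  set β := √⟪x - y, H (x - y)⟫
  have hα : α ^ 2 = ⟪x + y, H (x + y)⟫ := Real.sq_sqrt (hdiag (x + y) ▸ hB.nonneg _)
  have hβ : β ^ 2 = ⟪x - y, H (x - y)⟫ := Real.sq_sqrt (hdiag (x - y) ▸ hB.nonneg _)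
  have hsq : 2 * (2 * ⟪y, H y⟫) ≤ (α + β) ^ 2 := (Real.sqrt_le_left (by positivity)).1 htri
  nlinarith [hle (x - y), sq_nonneg (3 * α - β)]

end DiscreteWave

theorem le_add_sum_Icc_of_le_add {α : Type*} [AddCommMonoid α] [PartialOrder α]
    [IsOrderedAddMonoid α] {a b : ℕ → α} (h : ∀ n, a (n + 1) ≤ a n + b (n + 1)) (n : ℕ) :
    a n ≤ a 0 + ∑ k ∈ Finset.Icc 1 n, b k := by
  induction n with
  | zero => simp
  | succ n ih =>
    rw [Finset.sum_Icc_succ_top (Nat.le_add_left 1 n), ← add_assoc]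
    exact (h n).trans (add_le_add_left ih _)

theorem discrete_wave_energy_bound_general
    {V : Type*} [NormedAddCommGroup V] [InnerProductSpace ℝ V]
    (H : V →ₗ[ℝ] V)
    (hsym : ∀ x y : V, ⟪H x, y⟫ = ⟪x, H y⟫)
    (hpos : ∀ x : V, 0 ≤ ⟪x, H x⟫)
    (hbound : ∀ x : V, ⟪x, H x⟫ ≤ 3 * ‖x‖ ^ 2)
    (g : V) (h : ℕ → V) (u : ℕ → V)
    (hrec : ∀ t : ℕ, 1 ≤ t →
      u (t + 1) - (2 : ℝ) • u t + u (t - 1) = -(H (u t)) + h t)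
    (h0 : u 0 = 0) (h1 : u 1 = g) :
    ∀ t : ℕ, Real.sqrt ⟪u t, H (u t)⟫ ≤
      2 * (‖g‖ + ∑ k ∈ Finset.Icc 1 t, ‖h k‖) := by
  have hB : (discreteWaveEnergyForm H).IsPosSemidef :=
    isPosSemidef_discreteWaveEnergyForm hsym hpos fun x => by nlinarith [hbound x, sq_nonneg ‖x‖]
  set E : ℕ → ℝ := fun n => discreteWaveEnergyForm H (u (n + 1), u n) (u (n + 1), u n)
  have hstep (n : ℕ) : √(E (n + 1)) ≤ √(E n) + ‖h (n + 1)‖ := by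
    have hr := hrec (n + 1) le_add_self
    rw [Nat.add_sub_cancel] at hr
    have hu : u (n + 1 + 1) = (2 : ℝ) • u (n + 1) - u n - H (u (n + 1)) + h (n + 1) := by
      linear_combination (norm := module) hr
    simpa only [E, hu] using sqrt_discreteWaveEnergyForm_forced_step_le hB hsym _ _ _
  have hE0 : √(E 0) = ‖g‖ := by
    simp [E, h0, h1, discreteWaveEnergyForm_apply_self]
  intro t
  calc √⟪u t, H (u t)⟫
      ≤ 2 * √(E t) := by
        rw [Real.sqrt_le_left (by positivity), mul_pow, Real.sq_sqrt (hB.nonneg _)]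
        linarith [inner_map_self_le_four_mul_discreteWaveEnergyForm hB hsym hbound
          (u (t + 1)) (u t)]
    _ ≤ 2 * (‖g‖ + ∑ k ∈ Finset.Icc 1 t, ‖h k‖) := by
        rw [← hE0]
        gcongr
        exact le_add_sum_Icc_of_le_add (a := fun n => √(E n)) hstep t

/-- Energy bound for the inhomogeneous discrete wave equation on a
finite-dimensional real inner product space. -/
theorem discrete_wave_energy_bound
    {V : Type*} [NormedAddCommGroup V] [InnerProductSpace ℝ V]
    [FiniteDimensional ℝ V]
    (H : V →ₗ[ℝ] V)
    (hsym : ∀ x y : V, ⟪H x, y⟫ = ⟪x, H y⟫)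
    (hpos : ∀ x : V, 0 ≤ ⟪x, H x⟫)
    (hbound : ∀ x : V, ⟪x, H x⟫ ≤ 3 * ‖x‖ ^ 2)
    (g : V) (h : ℕ → V) (u : ℕ → V)
    (hrec : ∀ t : ℕ, 1 ≤ t →
      u (t + 1) - (2 : ℝ) • u t + u (t - 1) = -(H (u t)) + h t)
    (h0 : u 0 = 0) (h1 : u 1 = g) :
    ∀ t : ℕ, Real.sqrt ⟪u t, H (u t)⟫ ≤
      2 * (‖g‖ + ∑ k ∈ Finset.Icc 1 t, ‖h k‖) :=
  discrete_wave_energy_bound_general H hsym hpos hbound g h u hrec h0 h1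
end

section
/- Let V be a finite-dimensional real inner product space and let H : V → V be a self-adjoint positive semidefinite linear operator all of whose eigenvalues are at most 3 (equivalently, 0 ≤ ⟨x, Hx⟩ ≤ 3‖x‖² for all x ∈ V). Let g ∈ V and let u : ℕ → V satisfy the homogeneous discrete wave equation u(t+1) − 2u(t) + u(t−1) = −H u(t) for all t ≥ 1, with u(0) = 0 and u(1) = g. Then for every t ∈ ℕ, the energy satisfies E_H(u(t)) := ⟨u(t), H u(t)⟩ ≤ 4‖g‖². -/
/-!
The quantity `‖u (t+1) - u t‖² + ⟪u (t+1), H (u t)⟫` is conserved by the scheme, so it equals its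
initial value `‖g‖²`. Since `0 ≤ H ≤ 3` forces `H² ≤ 3H` (test the positivity of `H` at
`x - H x / 3`), completing the square in `‖2 (u (t+1) - u t) + H (u t)‖² ≥ 0` bounds `⟪u t, H (u t)⟫` by four times the conserved quantity.
-/

open scoped RealInnerProductSpace

section WaveEnergy

variable {V : Type*} [NormedAddCommGroup V] [InnerProductSpace ℝ V]

namespace LinearMap.IsSymmetric

theorem norm_apply_sq_le_mul_inner {H : V →ₗ[ℝ] V} (hH : H.IsSymmetric) {c : ℝ} (hc : 0 < c)
    (hpos : ∀ x, 0 ≤ ⟪x, H x⟫) (hbound : ∀ x, ⟪x, H x⟫ ≤ c * ‖x‖ ^ 2) (x : V) :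
    ‖H x‖ ^ 2 ≤ c * ⟪x, H x⟫ := by
  have key : 0 ≤ ⟪x, H x⟫ - 2 * c⁻¹ * ‖H x‖ ^ 2 + c⁻¹ ^ 2 * ⟪H x, H (H x)⟫ := by
    have hHx : ⟪x, H (H x)⟫ = ‖H x‖ ^ 2 := by rw [← hH, real_inner_self_eq_norm_sq]
    have := hpos (x - c⁻¹ • H x)
    simp only [map_sub, map_smul, inner_sub_left, inner_sub_right, real_inner_smul_left,
      real_inner_smul_right, hHx, real_inner_self_eq_norm_sq] at this
    linarith
  have hHH : c⁻¹ ^ 2 * ⟪H x, H (H x)⟫ ≤ c⁻¹ * ‖H x‖ ^ 2 := by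
    calc c⁻¹ ^ 2 * ⟪H x, H (H x)⟫ ≤ c⁻¹ ^ 2 * (c * ‖H x‖ ^ 2) := by gcongr; exact hbound (H x)
      _ = c⁻¹ * ‖H x‖ ^ 2 := by field_simp
  have : c⁻¹ * ‖H x‖ ^ 2 ≤ ⟪x, H x⟫ := by linarith
  rwa [inv_mul_le_iff₀ hc] at this

end LinearMap.IsSymmetric

def waveEnergy (H : V →ₗ[ℝ] V) (u : ℕ → V) (t : ℕ) : ℝ :=
  ‖u (t + 1) - u t‖ ^ 2 + ⟪u (t + 1), H (u t)⟫

theorem waveEnergy_step {H : V →ₗ[ℝ] V} (hH : H.IsSymmetric) {a b c : V}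
    (hrec : a - (2 : ℝ) • b + c = -H b) :
    ‖a - b‖ ^ 2 + ⟪a, H b⟫ = ‖b - c‖ ^ 2 + ⟪b, H c⟫ := by
  obtain rfl : a = (2 : ℝ) • b - c + -H b := by rw [← hrec]; module
  simp only [← real_inner_self_eq_norm_sq, inner_sub_left, inner_sub_right, inner_add_left,
    inner_add_right, inner_neg_left, inner_neg_right, real_inner_smul_left, real_inner_smul_right,
    hH b c, real_inner_comm b c, real_inner_comm b (H b)]
  ring

theorem waveEnergy_eq_norm_sq {H : V →ₗ[ℝ] V} (hH : H.IsSymmetric) {u : ℕ → V} {g : V}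
    (hrec : ∀ t : ℕ, 1 ≤ t → u (t + 1) - (2 : ℝ) • u t + u (t - 1) = -(H (u t)))
    (h0 : u 0 = 0) (h1 : u 1 = g) (t : ℕ) :
    waveEnergy H u t = ‖g‖ ^ 2 := by
  induction t with
  | zero => simp [waveEnergy, h0, h1]
  | succ t ih =>
    have hstep := hrec (t + 1) le_add_self
    rw [Nat.add_sub_cancel] at hstep
    rw [← ih, waveEnergy, waveEnergy_step hH hstep, waveEnergy]

theorem four_sub_mul_inner_le {H : V →ₗ[ℝ] V} {c : ℝ} {a b : V}
    (hb : ‖H b‖ ^ 2 ≤ c * ⟪b, H b⟫) :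
    (4 - c) * ⟪b, H b⟫ ≤ 4 * (‖a - b‖ ^ 2 + ⟪a, H b⟫) := by
  have hsq : ‖(2 : ℝ) • (a - b) + H b‖ ^ 2
      = 4 * ‖a - b‖ ^ 2 + 4 * ⟪a, H b⟫ - 4 * ⟪b, H b⟫ + ‖H b‖ ^ 2 := by
    rw [norm_add_sq_real, norm_smul, real_inner_smul_left, inner_sub_left, Real.norm_two]
    ring
  nlinarith [sq_nonneg ‖(2 : ℝ) • (a - b) + H b‖]

end WaveEnergy

theorem discrete_wave_energy_bound_homogeneous_general
    {V : Type*} [NormedAddCommGroup V] [InnerProductSpace ℝ V]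
    (H : V →ₗ[ℝ] V)
    (hsym : ∀ x y : V, ⟪H x, y⟫ = ⟪x, H y⟫)
    (hpos : ∀ x : V, 0 ≤ ⟪x, H x⟫)
    (hbound : ∀ x : V, ⟪x, H x⟫ ≤ 3 * ‖x‖ ^ 2)
    (g : V) (u : ℕ → V)
    (hrec : ∀ t : ℕ, 1 ≤ t →
      u (t + 1) - (2 : ℝ) • u t + u (t - 1) = -(H (u t)))
    (h0 : u 0 = 0) (h1 : u 1 = g) :
    ∀ t : ℕ, ⟪u t, H (u t)⟫ ≤ 4 * ‖g‖ ^ 2 := by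
  intro t
  have hHsq := LinearMap.IsSymmetric.norm_apply_sq_le_mul_inner hsym three_pos hpos hbound (u t)
  have hE := four_sub_mul_inner_le (a := u (t + 1)) hHsq
  rw [← waveEnergy_eq_norm_sq hsym hrec h0 h1 t]
  unfold waveEnergy
  linarith

/-- Energy bound for the homogeneous discrete wave equation on a
finite-dimensional real inner product space. -/
theorem discrete_wave_energy_bound_homogeneous
    {V : Type*} [NormedAddCommGroup V] [InnerProductSpace ℝ V]
    [FiniteDimensional ℝ V]
    (H : V →ₗ[ℝ] V)
    (hsym : ∀ x y : V, ⟪H x, y⟫ = ⟪x, H y⟫)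
    (hpos : ∀ x : V, 0 ≤ ⟪x, H x⟫)
    (hbound : ∀ x : V, ⟪x, H x⟫ ≤ 3 * ‖x‖ ^ 2)
    (g : V) (u : ℕ → V)
    (hrec : ∀ t : ℕ, 1 ≤ t →
      u (t + 1) - (2 : ℝ) • u t + u (t - 1) = -(H (u t)))
    (h0 : u 0 = 0) (h1 : u 1 = g) :
    ∀ t : ℕ, ⟪u t, H (u t)⟫ ≤ 4 * ‖g‖ ^ 2 :=
  discrete_wave_energy_bound_homogeneous_general H hsym hpos hbound g u hrec h0 h1
end

section
/- For every real α with −1 < α < 0 there exists a constant C_α > 0, depending only on α, such that for all real t > 0 and all real γ with 0 < γ ≤ 1/(4t), and for every complex number z with Re(z) = γ, one has |1/(z⁻¹ + t)|^α · Re(1/(z⁻¹ + t)) ≥ C_α · t^{−α/2} · γ^{1+α/2}. -/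
/-!
With `u = z⁻¹ + t` one has `‖1/u‖^α · Re(1/u) = Re u · ‖u‖^(-(α+2))`. Writing `s = ‖z‖⁻¹` and
`m = √(t/γ)`, we get `Re u = γ (s² + m²)` and, since `tγ ≤ 1` gives `t ≤ m`, also `‖u‖ ≤ s + m`.
For `0 ≤ α + 2 ≤ 2` the elementary bound `(s + m)² ≤ 2 (s² + m²)` then yields
`Re u · ‖u‖^(-(α+2)) ≥ γ m^(-α) / 2 = t^(-α/2) γ^(1+α/2) / 2`.
-/

open Real

theorem norm_one_div_rpow_mul_re {u : ℂ} (hu : u ≠ 0) (α : ℝ) :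
    ‖1 / u‖ ^ α * (1 / u).re = u.re * ‖u‖ ^ (-(α + 2)) := by
  have hpos : 0 < ‖u‖ := norm_pos_iff.mpr hu
  rw [one_div, norm_inv, Complex.inv_re, ← Complex.sq_norm, inv_rpow hpos.le,
    ← rpow_neg hpos.le, neg_add, rpow_add hpos, rpow_neg hpos.le 2, rpow_two]
  ring

theorem rpow_div_two_le_sq_add_sq_mul_rpow {q m s b : ℝ} (hq0 : 0 ≤ q) (hq2 : q ≤ 2)
    (hm : 0 < m) (hs : 0 ≤ s) (hb : 0 < b) (hbsm : b ≤ s + m) :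
    m ^ (2 - q) / 2 ≤ (s ^ 2 + m ^ 2) * b ^ (-q) := by
  have hsm : 0 < s + m := by linarith
  have hhalf : 1 / 2 ≤ (s ^ 2 + m ^ 2) / (s + m) ^ 2 := by
    rw [le_div_iff₀ (by positivity)]; nlinarith [sq_nonneg (s - m)]
  have hsplit : (s + m) ^ (-q) = (s + m) ^ (2 - q) / (s + m) ^ 2 := by
    rw [← rpow_two, ← rpow_sub hsm]; ring_nf
  calc m ^ (2 - q) / 2
      ≤ (s ^ 2 + m ^ 2) / (s + m) ^ 2 * m ^ (2 - q) := by
        rw [div_eq_mul_one_div, mul_comm]; gcongr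
    _ ≤ (s ^ 2 + m ^ 2) / (s + m) ^ 2 * (s + m) ^ (2 - q) := by
        gcongr; linarith
    _ = (s ^ 2 + m ^ 2) * (s + m) ^ (-q) := by rw [hsplit]; ring
    _ ≤ (s ^ 2 + m ^ 2) * b ^ (-q) := by
        gcongr ?_ * ?_
        exact rpow_le_rpow_of_nonpos hb hbsm (neg_nonpos.mpr hq0)

theorem rpow_neg_mul_rpow_eq_mul_sqrt_div_rpow {t γ : ℝ} (ht : 0 ≤ t) (hγ : 0 < γ) (α : ℝ) :
    t ^ (-(α / 2)) * γ ^ (1 + α / 2) = γ * √(t / γ) ^ (-α) := by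
  rw [← rpow_div_two_eq_sqrt _ (div_nonneg ht hγ.le), div_rpow ht hγ.le, rpow_add hγ,
    rpow_one, neg_div, rpow_neg hγ.le (α / 2)]
  field_simp

/-- Lower bound over the vertical line `Re z = γ` for the quantity
`|1/(z⁻¹ + t)|^α · Re (1/(z⁻¹ + t))`. -/
theorem min_exponent_bound (α : ℝ) (hα1 : -1 < α) (hα2 : α < 0) :
    ∃ C : ℝ, 0 < C ∧
      ∀ t : ℝ, 0 < t → ∀ γ : ℝ, 0 < γ → γ ≤ 1 / (4 * t) →
        ∀ z : ℂ, z.re = γ →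
          C * t ^ (-(α / 2)) * γ ^ (1 + α / 2) ≤
            ‖1 / (z⁻¹ + (t : ℂ))‖ ^ α * (1 / (z⁻¹ + (t : ℂ))).re := by
  refine ⟨1 / 2, by norm_num, fun t ht γ hγ hγt z hz => ?_⟩
  have hz0 : z ≠ 0 := by rintro rfl; simp at hz; linarith
  set m := √(t / γ)
  have hm : 0 < m := sqrt_pos.mpr (div_pos ht hγ)
  have htm : t ≤ m := by
    have : t * γ ≤ 1 := by rw [le_div_iff₀ (by positivity)] at hγt; nlinarith
    exact le_sqrt_of_sq_le (by rw [le_div_iff₀ hγ]; nlinarith)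
  have hre : (z⁻¹ + t).re = γ * (‖z‖⁻¹ ^ 2 + m ^ 2) := by
    rw [Complex.add_re, Complex.inv_re, hz, Complex.ofReal_re, Complex.normSq_eq_norm_sq,
      sq_sqrt (div_pos ht hγ).le]
    field_simp
  have hnorm : ‖z⁻¹ + t‖ ≤ ‖z‖⁻¹ + m :=
    (norm_add_le _ _).trans (by rw [norm_inv, Complex.norm_real, norm_of_nonneg ht.le]; linarith)
  have hu0 : z⁻¹ + (t : ℂ) ≠ 0 := fun h => by
    have : 0 < (z⁻¹ + (t : ℂ)).re := by rw [hre]; positivity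
    simp [h] at this
  have key := rpow_div_two_le_sq_add_sq_mul_rpow (q := α + 2) (by linarith) (by linarith) hm
    (by positivity) (norm_pos_iff.mpr hu0) hnorm
  rw [norm_one_div_rpow_mul_re hu0, hre, mul_assoc, rpow_neg_mul_rpow_eq_mul_sqrt_div_rpow ht.le hγ]
  rw [show 2 - (α + 2) = -α by ring] at key
  linarith [mul_le_mul_of_nonneg_left key hγ.le]
end

section
/- Let s > 0 and λ ≥ 0 be real numbers. Then ∫_0^∞ t^{−1/2} cos(√(λt)) e^{−st} dt = √(π/s) · exp(−λ/(4s)), where the integral is a convergent improper Lebesgue integral over (0, ∞). -/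
/-!
Substituting `t = x²` turns the Laplace transform of `t^{-1/2} cos √(λt)` into the half-line
integral of the Gaussian `cos(√λ x) e^{-s x²}`, an even function, hence half of its integral
over `ℝ`. That integral is the real part of the Fourier transform of the Gaussian,
`∫ e^{i a x} e^{-s x²} dx = √(π/s) e^{-a²/(4s)}`.
-/

open scoped Real
open MeasureTheory Set

open Complex in
theorem integral_cos_mul_mul_exp_neg_mul_sq {b : ℝ} (hb : 0 < b) (a : ℝ) :
    ∫ x : ℝ, Real.cos (a * x) * Real.exp (-b * x ^ 2) =
      √(π / b) * Real.exp (-a ^ 2 / (4 * b)) := by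
  have hrhs : (π / b : ℂ) ^ (1 / 2 : ℂ) * cexp (-(a : ℂ) ^ 2 / (4 * b)) =
      ((√(π / b) * Real.exp (-a ^ 2 / (4 * b)) : ℝ) : ℂ) := by
    rw [Real.sqrt_eq_rpow, ofReal_mul, ofReal_cpow (by positivity), ofReal_exp]
    push_cast
    rfl
  have hft := fourierIntegral_gaussian (b := (b : ℂ)) (by simpa using hb) a
  rw [hrhs] at hft
  have hint := Integrable.of_integral_ne_zero (hft ▸ ofReal_ne_zero.2 (by positivity))
  have hre (x : ℝ) : (cexp (I * a * x) * cexp (-b * x ^ 2)).re =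
      Real.cos (a * x) * Real.exp (-b * x ^ 2) := by
    rw [show I * a * x = ((a * x : ℝ) : ℂ) * I by push_cast; ring,
      show -b * x ^ 2 = ((-b * x ^ 2 : ℝ) : ℂ) by push_cast; rfl, ← ofReal_exp, re_mul_ofReal,
      exp_ofReal_mul_I_re]
  simp_rw [← hre]
  exact (reCLM.integral_comp_comm hint).trans (by rw [hft]; rfl)

theorem integral_Ioi_cos_mul_mul_exp_neg_mul_sq {b : ℝ} (hb : 0 < b) (a : ℝ) :
    ∫ x in Ioi 0, Real.cos (a * x) * Real.exp (-b * x ^ 2) =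
      √(π / b) * Real.exp (-a ^ 2 / (4 * b)) / 2 := by
  have heven := integral_comp_abs (f := fun x => Real.cos (a * x) * Real.exp (-b * x ^ 2))
  have hcos (x : ℝ) : Real.cos (a * |x|) = Real.cos (a * x) := by
    rcases abs_choice x with h | h <;> simp [h]
  simp only [hcos, sq_abs, integral_cos_mul_mul_exp_neg_mul_sq hb] at heven
  linarith

theorem integral_Ioi_rpow_neg_half_smul_comp_sqrt {E : Type*} [NormedAddCommGroup E]
    [NormedSpace ℝ E] (g : ℝ → E) :
    ∫ t in Ioi 0, t ^ (-(1 / 2) : ℝ) • g √t = (2 : ℝ) • ∫ x in Ioi 0, g x := by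
  rw [← integral_comp_rpow_Ioi_of_pos two_pos, ← integral_smul]
  refine setIntegral_congr_fun measurableSet_Ioi fun x (hx : 0 < x) => ?_
  have hjac : 2 * x ^ ((2 : ℝ) - 1) * (x ^ (2 : ℝ)) ^ (-(1 / 2) : ℝ) = 2 := by
    rw [← Real.rpow_mul hx.le, mul_assoc, ← Real.rpow_add hx]
    norm_num
  rw [smul_smul, hjac, Real.rpow_two, Real.sqrt_sq hx.le]

theorem integrableOn_rpow_mul_cos_mul_exp_neg_mul {r s : ℝ} (hr : -1 < r) (hs : 0 < s)
    {u : ℝ → ℝ} (hu : Measurable u) :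
    IntegrableOn (fun t => t ^ r * Real.cos (u t) * Real.exp (-s * t)) (Ioi 0) := by
  have hdom : IntegrableOn (fun t => t ^ r * Real.exp (-s * t)) (Ioi 0) := by
    simpa using integrableOn_rpow_mul_exp_neg_mul_rpow hr one_pos hs
  refine hdom.mono' (by fun_prop) ?_
  filter_upwards [ae_restrict_mem measurableSet_Ioi] with t (ht : 0 < t)
  rw [norm_mul, norm_mul, Real.norm_of_nonneg (Real.rpow_nonneg ht.le r), Real.norm_eq_abs,
    Real.norm_of_nonneg (Real.exp_pos _).le]
  gcongr
  exact mul_le_of_le_one_right (by positivity) (Real.abs_cos_le_one _)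

/-- Laplace transform identity:
`∫_0^∞ t^{-1/2} cos (√(λt)) e^{-st} dt = √(π/s) exp (-λ/(4s))`. -/
theorem laplace_transform_cos_sqrt (s lam : ℝ) (hs : 0 < s) (hlam : 0 ≤ lam) :
    MeasureTheory.IntegrableOn
      (fun t : ℝ => t ^ (-(1 / 2) : ℝ) * Real.cos (Real.sqrt (lam * t)) *
        Real.exp (-s * t)) (Set.Ioi 0) ∧
    (∫ t in Set.Ioi (0 : ℝ), t ^ (-(1 / 2) : ℝ) * Real.cos (Real.sqrt (lam * t)) *
        Real.exp (-s * t)) =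
      Real.sqrt (π / s) * Real.exp (-lam / (4 * s)) := by
  refine ⟨integrableOn_rpow_mul_cos_mul_exp_neg_mul (by norm_num) hs (by fun_prop), ?_⟩
  let g (x : ℝ) := Real.cos (√lam * x) * Real.exp (-s * x ^ 2)
  calc (∫ t in Ioi 0, t ^ (-(1 / 2) : ℝ) * Real.cos √(lam * t) * Real.exp (-s * t))
      = ∫ t in Ioi 0, t ^ (-(1 / 2) : ℝ) • g √t := by
        refine setIntegral_congr_fun measurableSet_Ioi fun t (ht : 0 < t) => ?_
        simp only [g, smul_eq_mul, Real.sqrt_mul hlam, Real.sq_sqrt ht.le, mul_assoc]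
    _ = (2 : ℝ) • ∫ x in Ioi 0, g x := integral_Ioi_rpow_neg_half_smul_comp_sqrt g
    _ = √(π / s) * Real.exp (-lam / (4 * s)) := by
        rw [integral_Ioi_cos_mul_mul_exp_neg_mul_sq hs, Real.sq_sqrt hlam, smul_eq_mul]
        ring
end
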